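/- Let f : ℝⁿ → ℝ and G : ℝⁿ → S^m be twice continuously differentiable, and let (x,Λ) ∈ ℝⁿ × S^m be a KKT pair of (P1). Then there exists Y ∈ S^m, which may be chosen positive semidefinite, such that (x,Y,Λ) is a KKT triple of (P2), i.e., ∇f(x) − DG(x)*Λ = 0, Λ∘Y = 0, and G(x) − Y∘Y = 0. -/

import Mathlib

open Matrix

noncomputable section

def jmul {m : ℕ} (A B : Matrix (Fin m) (Fin m) ℝ) : Matrix (Fin m) (Fin m) ℝ :=
  (1 / 2 : ℝ) • (A * B + B * A)

def minner {m : ℕ} (A B : Matrix (Fin m) (Fin m) ℝ) : ℝ :=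
  (A * B).trace

def memPhi {m : ℕ} (Λ Y : Matrix (Fin m) (Fin m) ℝ) : Prop :=
  ∀ W : Matrix (Fin m) (Fin m) ℝ, W.IsSymm → W ≠ 0 → jmul Y W = 0 →
    0 < minner (jmul W W) Λ

def pderivG {n m : ℕ} (G : (Fin n → ℝ) → Matrix (Fin m) (Fin m) ℝ)
    (x : Fin n → ℝ) (k : Fin n) : Matrix (Fin m) (Fin m) ℝ :=
  Matrix.of fun i j => fderiv ℝ (fun y => G y i j) x (Pi.single k 1)

def dirDerivG {n m : ℕ} (G : (Fin n → ℝ) → Matrix (Fin m) (Fin m) ℝ)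
    (x v : Fin n → ℝ) : Matrix (Fin m) (Fin m) ℝ :=
  ∑ k, v k • pderivG G x k

def adjDG {n m : ℕ} (G : (Fin n → ℝ) → Matrix (Fin m) (Fin m) ℝ)
    (x : Fin n → ℝ) (W : Matrix (Fin m) (Fin m) ℝ) : Fin n → ℝ :=
  fun k => minner (pderivG G x k) W

def gradf {n : ℕ} (f : (Fin n → ℝ) → ℝ) (x : Fin n → ℝ) : Fin n → ℝ :=
  fun k => fderiv ℝ f x (Pi.single k 1)

def KKT1 {n m : ℕ} (f : (Fin n → ℝ) → ℝ) (G : (Fin n → ℝ) → Matrix (Fin m) (Fin m) ℝ)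
    (x : Fin n → ℝ) (Λ : Matrix (Fin m) (Fin m) ℝ) : Prop :=
  gradf f x = adjDG G x Λ ∧ Λ.PosSemidef ∧ (G x).PosSemidef ∧ jmul Λ (G x) = 0

def KKT2 {n m : ℕ} (f : (Fin n → ℝ) → ℝ) (G : (Fin n → ℝ) → Matrix (Fin m) (Fin m) ℝ)
    (x : Fin n → ℝ) (Y Λ : Matrix (Fin m) (Fin m) ℝ) : Prop :=
  gradf f x = adjDG G x Λ ∧ jmul Λ Y = 0 ∧ G x = jmul Y Y

def hessQ {n m : ℕ} (f : (Fin n → ℝ) → ℝ) (G : (Fin n → ℝ) → Matrix (Fin m) (Fin m) ℝ)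
    (Λ : Matrix (Fin m) (Fin m) ℝ) (x v : Fin n → ℝ) : ℝ :=
  iteratedFDeriv ℝ 2 (fun y => f y - minner (G y) Λ) x ![v, v]

def SOSCNLP {n m : ℕ} (f : (Fin n → ℝ) → ℝ) (G : (Fin n → ℝ) → Matrix (Fin m) (Fin m) ℝ)
    (x : Fin n → ℝ) (Y Λ : Matrix (Fin m) (Fin m) ℝ) : Prop :=
  ∀ (v : Fin n → ℝ) (W : Matrix (Fin m) (Fin m) ℝ), W.IsSymm →
    ¬(v = 0 ∧ W = 0) → dirDerivG G x v = (2 : ℝ) • jmul Y W →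
    0 < hessQ f G Λ x v + 2 * minner (jmul W W) Λ

def SONCNLP {n m : ℕ} (f : (Fin n → ℝ) → ℝ) (G : (Fin n → ℝ) → Matrix (Fin m) (Fin m) ℝ)
    (x : Fin n → ℝ) (Y Λ : Matrix (Fin m) (Fin m) ℝ) : Prop :=
  ∀ (v : Fin n → ℝ) (W : Matrix (Fin m) (Fin m) ℝ), W.IsSymm →
    dirDerivG G x v = (2 : ℝ) • jmul Y W →
    0 ≤ hessQ f G Λ x v + 2 * minner (jmul W W) Λ

def LICQ {n m : ℕ} (G : (Fin n → ℝ) → Matrix (Fin m) (Fin m) ℝ)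
    (x : Fin n → ℝ) (Y : Matrix (Fin m) (Fin m) ℝ) : Prop :=
  ∀ W : Matrix (Fin m) (Fin m) ℝ, W.IsSymm → jmul Y W = 0 → adjDG G x W = 0 → W = 0

def Nondeg {n m : ℕ} (G : (Fin n → ℝ) → Matrix (Fin m) (Fin m) ℝ)
    (x : Fin n → ℝ) : Prop :=
  ∀ W : Matrix (Fin m) (Fin m) ℝ, W.IsSymm → G x * W = 0 → adjDG G x W = 0 → W = 0

def CritCone {n m : ℕ} (f : (Fin n → ℝ) → ℝ) (G : (Fin n → ℝ) → Matrix (Fin m) (Fin m) ℝ)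
    (x : Fin n → ℝ) : Set (Fin n → ℝ) :=
  {d | (∀ u : Fin m → ℝ, G x *ᵥ u = 0 → 0 ≤ u ⬝ᵥ (dirDerivG G x d *ᵥ u)) ∧
    gradf f x ⬝ᵥ d = 0}

def IsMPInv {m : ℕ} (A P : Matrix (Fin m) (Fin m) ℝ) : Prop :=
  A * P * A = A ∧ P * A * P = P ∧ (A * P)ᵀ = A * P ∧ (P * A)ᵀ = P * A

def Hmat {n m : ℕ} (G : (Fin n → ℝ) → Matrix (Fin m) (Fin m) ℝ)
    (x : Fin n → ℝ) (Λ P : Matrix (Fin m) (Fin m) ℝ) : Matrix (Fin n) (Fin n) ℝ :=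
  Matrix.of fun i j => 2 * (pderivG G x i * P * pderivG G x j * Λ).trace

/-! Take `Y = √G(x)`. For positive semidefinite `Λ` and `G(x)`, the complementarity `Λ ∘ G(x) = 0`
gives `tr (Λ G(x)) = 0`, which is the squared Frobenius norm of `√Λ √G(x)`; hence `√Λ Y = 0`, so
`Λ Y = 0`, and since both factors are symmetric also `Y Λ = 0`. -/

open scoped MatrixOrder ComplexOrder

namespace Matrix

variable {n 𝕜 : Type*} [Fintype n] [DecidableEq n] [RCLike 𝕜]

theorem PosSemidef.mul_sqrt_eq_zero_of_trace_mul_eq_zero {A B : Matrix n n 𝕜}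
    (hA : A.PosSemidef) (hB : B.PosSemidef) (h : (A * B).trace = 0) :
    A * CFC.sqrt B = 0 := by
  set a := CFC.sqrt A
  set b := CFC.sqrt B
  have ha : aᴴ = a := (CFC.sqrt_nonneg A).posSemidef.1
  have hb : bᴴ = b := (CFC.sqrt_nonneg B).posSemidef.1
  have haa : a * a = A := CFC.sqrt_mul_sqrt_self A hA.nonneg
  have hbb : b * b = B := CFC.sqrt_mul_sqrt_self B hB.nonneg
  -- `tr ((a b)ᴴ (a b)) = tr (b a a b) = tr (A B)`
  have hab : a * b = 0 := by
    rw [← trace_conjTranspose_mul_self_eq_zero_iff, conjTranspose_mul, ha, hb, ← h, ← haa, ← hbb,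
      Matrix.mul_assoc, trace_mul_comm]
    simp only [Matrix.mul_assoc]
  rw [← haa, Matrix.mul_assoc, hab, Matrix.mul_zero]

end Matrix

theorem trace_mul_eq_zero_of_jmul_eq_zero {m : ℕ} {A B : Matrix (Fin m) (Fin m) ℝ}
    (h : jmul A B = 0) : (A * B).trace = 0 := by
  have := congrArg Matrix.trace h
  rw [jmul, Matrix.trace_smul, Matrix.trace_add, Matrix.trace_mul_comm B A] at this
  simpa using this

theorem jmul_eq_zero_of_mul_eq_zero {m : ℕ} {A B : Matrix (Fin m) (Fin m) ℝ}
    (hA : A.IsHermitian) (hB : B.IsHermitian) (h : A * B = 0) : jmul A B = 0 := by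
  have hBA : B * A = 0 := by
    rw [← hA.eq, ← hB.eq, ← Matrix.conjTranspose_mul, h, Matrix.conjTranspose_zero]
  rw [jmul, h, hBA, add_zero, smul_zero]

theorem jmul_self {m : ℕ} (Y : Matrix (Fin m) (Fin m) ℝ) : jmul Y Y = Y * Y := by
  rw [jmul, ← two_smul ℝ (Y * Y), smul_smul]
  norm_num

theorem stmt5_general {n m : ℕ} (f : (Fin n → ℝ) → ℝ) (G : (Fin n → ℝ) → Matrix (Fin m) (Fin m) ℝ)
    (x : Fin n → ℝ) (Λ : Matrix (Fin m) (Fin m) ℝ)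
    (hKKT : KKT1 f G x Λ) :
    ∃ Y : Matrix (Fin m) (Fin m) ℝ, Y.PosSemidef ∧ KKT2 f G x Y Λ := by
  obtain ⟨hgrad, hΛ, hGx, hcompl⟩ := hKKT
  have hY : (CFC.sqrt (G x)).PosSemidef := (CFC.sqrt_nonneg (G x)).posSemidef
  refine ⟨CFC.sqrt (G x), hY, hgrad, jmul_eq_zero_of_mul_eq_zero hΛ.1 hY.1 ?_, ?_⟩
  · exact hΛ.mul_sqrt_eq_zero_of_trace_mul_eq_zero hGx (trace_mul_eq_zero_of_jmul_eq_zero hcompl)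
  · rw [jmul_self, CFC.sqrt_mul_sqrt_self (G x) hGx.nonneg]

theorem stmt5 {n m : ℕ} (f : (Fin n → ℝ) → ℝ) (G : (Fin n → ℝ) → Matrix (Fin m) (Fin m) ℝ)
    (hf : ContDiff ℝ 2 f) (hG : ∀ i j, ContDiff ℝ 2 fun y => G y i j)
    (x : Fin n → ℝ) (Λ : Matrix (Fin m) (Fin m) ℝ)
    (hΛ : Λ.IsSymm) (hKKT : KKT1 f G x Λ) :
    ∃ Y : Matrix (Fin m) (Fin m) ℝ, Y.PosSemidef ∧ KKT2 f G x Y Λ :=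
  stmt5_general f G x Λ hKKT
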